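/- Let τ ∈ ℝ, let Ω ⊆ ℝ² be open, and let u, v : Ω → ℝ be smooth functions with v_x² + v_y² < 1 satisfying the twin relations u_x = v_y/ω̃ − τy and u_y = −v_x/ω̃ + τx on Ω, where ω̃ = (1 − v_x² − v_y²)^(1/2). With α = u_x + τy, β = u_y − τx, ω = (1 + α² + β²)^(1/2), ν = 1/ω, K = [(u_xx + 2ταβ)(u_yy − 2ταβ) − (u_xy + τ(β²−α²))²]/ω⁴ + τ² − 4τ²ν², and K̃ = (v_xy² − v_xx v_yy)/ω̃⁴, the inequality K ≤ −4τ²ν⁴ + K̃ ν² (1 − 2ν²) holds on Ω. -/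

import Mathlib

/-- Partial derivative in the `x` direction. -/
noncomputable def px (f : ℝ × ℝ → ℝ) (p : ℝ × ℝ) : ℝ := fderiv ℝ f p (1, 0)

/-- Partial derivative in the `y` direction. -/
noncomputable def py (f : ℝ × ℝ → ℝ) (p : ℝ × ℝ) : ℝ := fderiv ℝ f p (0, 1)

/-- `α = u_x + τ y`. -/
noncomputable def alph (τ : ℝ) (u : ℝ × ℝ → ℝ) (p : ℝ × ℝ) : ℝ := px u p + τ * p.2

/-- `β = u_y − τ x`. -/
noncomputable def bet (τ : ℝ) (u : ℝ × ℝ → ℝ) (p : ℝ × ℝ) : ℝ := py u p - τ * p.1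

/-- Riemannian area element `ω = (1 + α² + β²)^(1/2)` of the graph of `u`. -/
noncomputable def omeg (τ : ℝ) (u : ℝ × ℝ → ℝ) (p : ℝ × ℝ) : ℝ :=
  Real.sqrt (1 + (alph τ u p) ^ 2 + (bet τ u p) ^ 2)

/-- Lorentzian area element `ω̃ = (1 − v_x² − v_y²)^(1/2)` of the graph of `v`. -/
noncomputable def omegT (v : ℝ × ℝ → ℝ) (p : ℝ × ℝ) : ℝ :=
  Real.sqrt (1 - (px v p) ^ 2 - (py v p) ^ 2)

/-- Angle function `ν = 1/ω` of the graph of `u`, as a function on `ℝ²`. -/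
noncomputable def nuF (τ : ℝ) (u : ℝ × ℝ → ℝ) : ℝ × ℝ → ℝ := fun q => 1 / omeg τ u q

/-- Gauss curvature of the minimal graph of `u` in `Nil₃(τ)`, via the Gauss
equation `K = det A + τ² − 4τ²ν²` in coordinates. -/
noncomputable def gaussK (τ : ℝ) (u : ℝ × ℝ → ℝ) (p : ℝ × ℝ) : ℝ :=
  ((px (px u) p + 2 * τ * alph τ u p * bet τ u p) *
      (py (py u) p - 2 * τ * alph τ u p * bet τ u p) -
    (py (px u) p + τ * ((bet τ u p) ^ 2 - (alph τ u p) ^ 2)) ^ 2) / (omeg τ u p) ^ 4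
    + τ ^ 2 - 4 * τ ^ 2 * (nuF τ u p) ^ 2

/-- Gauss curvature `K̃ = (v_xy² − v_xx v_yy)/ω̃⁴` of the spacelike graph of `v`. -/
noncomputable def gaussKT (v : ℝ × ℝ → ℝ) (p : ℝ × ℝ) : ℝ :=
  ((py (px v) p) ^ 2 - px (px v) p * py (py v) p) / (omegT v p) ^ 4

/-- Squared norm of the intrinsic gradient of the angle function `ν` with
respect to the induced metric `[[1+α², αβ],[αβ, 1+β²]]` of the graph of `u`. -/
noncomputable def gradNuSq (τ : ℝ) (u : ℝ × ℝ → ℝ) (p : ℝ × ℝ) : ℝ :=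
  ((1 + (bet τ u p) ^ 2) * (px (nuF τ u) p) ^ 2
      - 2 * alph τ u p * bet τ u p * px (nuF τ u) p * py (nuF τ u) p
      + (1 + (alph τ u p) ^ 2) * (py (nuF τ u) p) ^ 2) / (omeg τ u p) ^ 2

lemma keyIneq (a b r s t τ w : ℝ) (hw0 : 0 < w) (hw : w^2 = 1 - a^2 - b^2)
    (hcmc : r*(1-b^2) + 2*(a*b)*s + t*(1-a^2) = 2*τ*w^3) :
    0 ≤ (-4*τ^2*w^6 + (s^2 - r*t)*(1-2*w^2))
        - ((s*w^2 + a*b*r + b^2*s - 2*τ*(a*b)*w) * (-(s*w^2 + a^2*s + a*b*t) + 2*τ*(a*b)*w)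
            - (t*w^2 + a*b*s + b^2*t - τ*w^3 + τ*(a^2 - b^2)*w)^2)
        - (τ^2 - 4*τ^2*w^2)*w^2 := by
  have hW2 : 0 < 1 - a^2 - b^2 := hw ▸ (by positivity)
  have h1b : 0 < 1 - b^2 := by nlinarith [sq_nonneg a]
  set F1 : ℝ := b*r - a*s with hF1
  set F2 : ℝ := b*s - a*t with hF2
  have hQ : 0 ≤ (1-b^2)*F1^2 + 2*(a*b)*(F1*F2) + (1-a^2)*F2^2 := by
    have h2 : (1-b^2) * ((1-b^2)*F1^2 + 2*(a*b)*(F1*F2) + (1-a^2)*F2^2)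
        = ((1-b^2)*F1 + a*b*F2)^2 + (1-a^2-b^2)*F2^2 := by ring
    nlinarith [sq_nonneg ((1-b^2)*F1 + a*b*F2), sq_nonneg F2,
      mul_nonneg hW2.le (sq_nonneg F2)]
  have h6 : (0:ℝ) < 4*w^6 := by positivity
  have hid : ((-4*τ^2*w^6 + (s^2 - r*t)*(1-2*w^2))
        - ((s*w^2 + a*b*r + b^2*s - 2*τ*(a*b)*w) * (-(s*w^2 + a^2*s + a*b*t) + 2*τ*(a*b)*w)
            - (t*w^2 + a*b*s + b^2*t - τ*w^3 + τ*(a^2 - b^2)*w)^2)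
        - (τ^2 - 4*τ^2*w^2)*w^2) * (4*w^6)
      = ((1-b^2)*F1^2 + 2*(a*b)*(F1*F2) + (1-a^2)*F2^2) * (4*w^6) := by
    rw [hF1, hF2]
    linear_combination ((4 : ℝ)*t + (-8 : ℝ)*b^2*τ*w + (-12 : ℝ)*b^2*t + (-4 : ℝ)*b^2*r + (24 : ℝ)*b^4*τ*w + (12 : ℝ)*b^4*t + (12 : ℝ)*b^4*r + (-24 : ℝ)*b^6*τ*w + (-4 : ℝ)*b^6*t + (-12 : ℝ)*b^6*r + (8 : ℝ)*b^8*τ*w + (4 : ℝ)*b^8*r + (12 : ℝ)*a*b*s + (-36 : ℝ)*a*b^3*s + (36 : ℝ)*a*b^5*s + (-12 : ℝ)*a*b^7*s + (-20 : ℝ)*a^2*t + (24 : ℝ)*a^2*b^2*τ*w + (48 : ℝ)*a^2*b^2*t + (12 : ℝ)*a^2*b^2*r + (-48 : ℝ)*a^2*b^4*τ*w + (-36 : ℝ)*a^2*b^4*t + (-24 : ℝ)*a^2*b^4*r + (24 : ℝ)*a^2*b^6*τ*w + (8 : ℝ)*a^2*b^6*t + (12 : ℝ)*a^2*b^6*r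 + (-36 : ℝ)*a^3*b*s + (72 : ℝ)*a^3*b^3*s + (-36 : ℝ)*a^3*b^5*s + (36 : ℝ)*a^4*t + (-24 : ℝ)*a^4*b^2*τ*w + (-60 : ℝ)*a^4*b^2*t + (-12 : ℝ)*a^4*b^2*r + (24 : ℝ)*a^4*b^4*τ*w + (24 : ℝ)*a^4*b^4*t + (12 : ℝ)*a^4*b^4*r + (36 : ℝ)*a^5*b*s + (-36 : ℝ)*a^5*b^3*s + (-28 : ℝ)*a^6*t + (8 : ℝ)*a^6*b^2*τ*w + (24 : ℝ)*a^6*b^2*t + (4 : ℝ)*a^6*b^2*r + (-12 : ℝ)*a^7*b*s + (8 : ℝ)*a^8*t) * hcmc + ((4 : ℝ)*τ^2*w^8 + (-12 : ℝ)*τ^2*w^10 + (-8 : ℝ)*t*τ*w^3 + (-8 : ℝ)*t*τ*w^5 + (-8 : ℝ)*t*τ*w^7 + (-8 : ℝ)*t*τ*w^9 + (4 : ℝ)*t^2 + (4 : ℝ)*t^2*w^2 + (4 : ℝ)*t^2*w^4 + (4 : ℝ)*t^2*w^6 + (4 : ℝ)*t^2*w^8 + (-4 : ℝ)*s^2*w^6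 + (4 : ℝ)*s^2*w^8 + (4 : ℝ)*r*t + (4 : ℝ)*r*t*w^2 + (4 : ℝ)*r*t*w^4 + (8 : ℝ)*r*t*w^6 + (16 : ℝ)*b^2*τ^2*w^4 + (16 : ℝ)*b^2*τ^2*w^6 + (20 : ℝ)*b^2*τ^2*w^8 + (-8 : ℝ)*b^2*t*τ*w + (8 : ℝ)*b^2*t*τ*w^3 + (-8 : ℝ)*b^2*t*τ*w^7 + (-8 : ℝ)*b^2*t^2 + (-4 : ℝ)*b^2*t^2*w^2 + (4 : ℝ)*b^2*t^2*w^6 + (-8 : ℝ)*b^2*r*τ*w + (-16 : ℝ)*b^2*r*t + (-12 : ℝ)*b^2*r*t*w^2 + (-8 : ℝ)*b^2*r*t*w^4 + (-4 : ℝ)*b^2*r^2 + (-4 : ℝ)*b^2*r^2*w^2 + (-4 : ℝ)*b^2*r^2*w^4 + (-32 : ℝ)*b^4*τ^2*w^4 + (-16 : ℝ)*b^4*τ^2*w^6 + (16 : ℝ)*b^4*t*τ*w + (4 : ℝ)*b^4*t^2 + (24 : ℝ)*b^4*r*τ*w + (20 : ℝ)*b^4*r*t + (8 : ℝ)*b^4*r*t*w^2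 + (12 : ℝ)*b^4*r^2 + (8 : ℝ)*b^4*r^2*w^2 + (4 : ℝ)*b^4*r^2*w^4 + (16 : ℝ)*b^6*τ^2*w^4 + (-8 : ℝ)*b^6*t*τ*w + (-24 : ℝ)*b^6*r*τ*w + (-8 : ℝ)*b^6*r*t + (-12 : ℝ)*b^6*r^2 + (-4 : ℝ)*b^6*r^2*w^2 + (8 : ℝ)*b^8*r*τ*w + (4 : ℝ)*b^8*r^2 + (-24 : ℝ)*a*b*s*τ*w^3 + (-24 : ℝ)*a*b*s*τ*w^5 + (-24 : ℝ)*a*b*s*τ*w^7 + (20 : ℝ)*a*b*s*t + (20 : ℝ)*a*b*s*t*w^2 + (20 : ℝ)*a*b*s*t*w^4 + (12 : ℝ)*a*b*s*t*w^6 + (12 : ℝ)*a*b*r*s + (12 : ℝ)*a*b*r*s*w^2 + (12 : ℝ)*a*b*r*s*w^4 + (4 : ℝ)*a*b*r*s*w^6 + (-16 : ℝ)*a*b^3*s*τ*w + (32 : ℝ)*a*b^3*s*τ*w^3 + (8 : ℝ)*a*b^3*s*τ*w^5 + (-40 : ℝ)*a*b^3*s*t + (-20 : ℝ)*a*b^3*s*t*w^2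 + (-44 : ℝ)*a*b^3*r*s + (-32 : ℝ)*a*b^3*r*s*w^2 + (-20 : ℝ)*a*b^3*r*s*w^4 + (32 : ℝ)*a*b^5*s*τ*w + (-8 : ℝ)*a*b^5*s*τ*w^3 + (20 : ℝ)*a*b^5*s*t + (52 : ℝ)*a*b^5*r*s + (20 : ℝ)*a*b^5*r*s*w^2 + (-16 : ℝ)*a*b^7*s*τ*w + (-20 : ℝ)*a*b^7*r*s + (4 : ℝ)*a^2*τ^2*w^8 + (32 : ℝ)*a^2*t*τ*w^3 + (24 : ℝ)*a^2*t*τ*w^5 + (16 : ℝ)*a^2*t*τ*w^7 + (-20 : ℝ)*a^2*t^2 + (-16 : ℝ)*a^2*t^2*w^2 + (-12 : ℝ)*a^2*t^2*w^4 + (-4 : ℝ)*a^2*t^2*w^6 + (-16 : ℝ)*a^2*r*t + (-12 : ℝ)*a^2*r*t*w^2 + (-8 : ℝ)*a^2*r*t*w^4 + (-32 : ℝ)*a^2*b^2*τ^2*w^4 + (-16 : ℝ)*a^2*b^2*τ^2*w^6 + (24 : ℝ)*a^2*b^2*t*τ*w + (-32 : ℝ)*a^2*b^2*t*τ*w^3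 + (-8 : ℝ)*a^2*b^2*t*τ*w^5 + (32 : ℝ)*a^2*b^2*t^2 + (12 : ℝ)*a^2*b^2*t^2*w^2 + (24 : ℝ)*a^2*b^2*s^2 + (24 : ℝ)*a^2*b^2*s^2*w^2 + (24 : ℝ)*a^2*b^2*s^2*w^4 + (16 : ℝ)*a^2*b^2*r*τ*w + (-8 : ℝ)*a^2*b^2*r*τ*w^3 + (-8 : ℝ)*a^2*b^2*r*τ*w^5 + (52 : ℝ)*a^2*b^2*r*t + (28 : ℝ)*a^2*b^2*r*t*w^2 + (12 : ℝ)*a^2*b^2*r*t*w^4 + (8 : ℝ)*a^2*b^2*r^2 + (4 : ℝ)*a^2*b^2*r^2*w^2 + (32 : ℝ)*a^2*b^4*τ^2*w^4 + (-32 : ℝ)*a^2*b^4*t*τ*w + (8 : ℝ)*a^2*b^4*t*τ*w^3 + (-12 : ℝ)*a^2*b^4*t^2 + (-48 : ℝ)*a^2*b^4*s^2 + (-24 : ℝ)*a^2*b^4*s^2*w^2 + (-32 : ℝ)*a^2*b^4*r*τ*w + (8 : ℝ)*a^2*b^4*r*τ*w^3 + (-48 : ℝ)*a^2*b^4*r*t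 + (-12 : ℝ)*a^2*b^4*r*t*w^2 + (-16 : ℝ)*a^2*b^4*r^2 + (-4 : ℝ)*a^2*b^4*r^2*w^2 + (8 : ℝ)*a^2*b^6*t*τ*w + (24 : ℝ)*a^2*b^6*s^2 + (16 : ℝ)*a^2*b^6*r*τ*w + (12 : ℝ)*a^2*b^6*r*t + (8 : ℝ)*a^2*b^6*r^2 + (48 : ℝ)*a^3*b*s*τ*w^3 + (24 : ℝ)*a^3*b*s*τ*w^5 + (-68 : ℝ)*a^3*b*s*t + (-48 : ℝ)*a^3*b*s*t*w^2 + (-28 : ℝ)*a^3*b*s*t*w^4 + (-24 : ℝ)*a^3*b*r*s + (-12 : ℝ)*a^3*b*r*s*w^2 + (32 : ℝ)*a^3*b^3*s*τ*w + (-32 : ℝ)*a^3*b^3*s*τ*w^3 + (96 : ℝ)*a^3*b^3*s*t + (28 : ℝ)*a^3*b^3*s*t*w^2 + (64 : ℝ)*a^3*b^3*r*s + (20 : ℝ)*a^3*b^3*r*s*w^2 + (-32 : ℝ)*a^3*b^5*s*τ*w + (-28 : ℝ)*a^3*b^5*s*t + (-40 : ℝ)*a^3*b^5*r*s + (-40 :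 ℝ)*a^4*t*τ*w^3 + (-16 : ℝ)*a^4*t*τ*w^5 + (36 : ℝ)*a^4*t^2 + (20 : ℝ)*a^4*t^2*w^2 + (8 : ℝ)*a^4*t^2*w^4 + (20 : ℝ)*a^4*r*t + (8 : ℝ)*a^4*r*t*w^2 + (16 : ℝ)*a^4*b^2*τ^2*w^4 + (-24 : ℝ)*a^4*b^2*t*τ*w + (24 : ℝ)*a^4*b^2*t*τ*w^3 + (-40 : ℝ)*a^4*b^2*t^2 + (-8 : ℝ)*a^4*b^2*t^2*w^2 + (-48 : ℝ)*a^4*b^2*s^2 + (-24 : ℝ)*a^4*b^2*s^2*w^2 + (-8 : ℝ)*a^4*b^2*r*τ*w + (8 : ℝ)*a^4*b^2*r*τ*w^3 + (-48 : ℝ)*a^4*b^2*r*t + (-12 : ℝ)*a^4*b^2*r*t*w^2 + (-4 : ℝ)*a^4*b^2*r^2 + (16 : ℝ)*a^4*b^4*t*τ*w + (8 : ℝ)*a^4*b^4*t^2 + (48 : ℝ)*a^4*b^4*s^2 + (8 : ℝ)*a^4*b^4*r*τ*w + (24 : ℝ)*a^4*b^4*r*t + (4 : ℝ)*a^4*b^4*r^2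 + (-24 : ℝ)*a^5*b*s*τ*w^3 + (76 : ℝ)*a^5*b*s*t + (28 : ℝ)*a^5*b*s*t*w^2 + (12 : ℝ)*a^5*b*r*s + (-16 : ℝ)*a^5*b^3*s*τ*w + (-56 : ℝ)*a^5*b^3*s*t + (-20 : ℝ)*a^5*b^3*r*s + (16 : ℝ)*a^6*t*τ*w^3 + (-28 : ℝ)*a^6*t^2 + (-8 : ℝ)*a^6*t^2*w^2 + (-8 : ℝ)*a^6*r*t + (8 : ℝ)*a^6*b^2*t*τ*w + (16 : ℝ)*a^6*b^2*t^2 + (24 : ℝ)*a^6*b^2*s^2 + (12 : ℝ)*a^6*b^2*r*t + (-28 : ℝ)*a^7*b*s*t + (8 : ℝ)*a^8*t^2) * hw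
  have := mul_le_mul_iff_of_pos_right h6 |>.mp (by rw [hid])
  nlinarith [mul_pos h6 h6]

lemma hasFDerivAt_div' {f g : ℝ × ℝ → ℝ} {df dg : (ℝ × ℝ) →L[ℝ] ℝ} {p : ℝ × ℝ}
    (hf : HasFDerivAt f df p) (hg : HasFDerivAt g dg p) (h0 : g p ≠ 0) :
    HasFDerivAt (fun q => f q / g q) (-(f p • (g p ^ 2)⁻¹ • dg) + (g p)⁻¹ • df) p := by
  have hinv : HasFDerivAt (fun q => (g q)⁻¹) (-((g p ^ 2)⁻¹ • dg)) p := by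
    simpa [Function.comp_def] using (hasDerivAt_inv h0).comp_hasFDerivAt p hg
  have h := hf.mul hinv; simp only [smul_neg] at h; simp only [div_eq_mul_inv]; exact h

lemma master (a b r s t τ w : ℝ) (hw0 : 0 < w) (hw : w^2 = 1 - a^2 - b^2)
    (hcmc : r*(1-b^2) + 2*(a*b)*s + t*(1-a^2) = 2*τ*w^3)
    (u11 u12 u22 al be om ν Kt : ℝ)
    (h11 : u11 = (s*w^2 + a*b*r + b^2*s)/w^3)
    (h12 : u12 = (t*w^2 + a*b*s + b^2*t)/w^3 - τ)
    (h22 : u22 = -((s*w^2 + a^2*s + a*b*t)/w^3))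
    (hal : al = b/w) (hbe : be = -a/w) (hom : om = 1/w) (hν : ν = w)
    (hKt : Kt = (s^2 - r*t)/w^4) :
    ((u11 + 2 * τ * al * be) * (u22 - 2 * τ * al * be)
        - (u12 + τ * (be ^ 2 - al ^ 2)) ^ 2) / om ^ 4 + τ ^ 2 - 4 * τ ^ 2 * ν ^ 2
      ≤ -4 * τ ^ 2 * ν ^ 4 + Kt * ν ^ 2 * (1 - 2 * ν ^ 2) := by
  rw [h11, h12, h22, hal, hbe, hom, hν, hKt]
  rw [← sub_nonneg]
  have key := keyIneq a b r s t τ w hw0 hw hcmc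
  have hne : w ≠ 0 := hw0.ne'
  have h2 : 0 ≤ ((-4*τ^2*w^6 + (s^2 - r*t)*(1-2*w^2))
        - ((s*w^2 + a*b*r + b^2*s - 2*τ*(a*b)*w) * (-(s*w^2 + a^2*s + a*b*t) + 2*τ*(a*b)*w)
            - (t*w^2 + a*b*s + b^2*t - τ*w^3 + τ*(a^2 - b^2)*w)^2)
        - (τ^2 - 4*τ^2*w^2)*w^2) / w^2 := div_nonneg key (by positivity)
  convert h2 using 1
  field_simp
  ring

set_option maxHeartbeats 2000000 in
/-- for dual graphs, the Gauss curvature `K` of the (not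
necessarily entire) minimal graph in `Nil₃(τ)` satisfies
`K ≤ −4τ²ν⁴ + K̃ ν² (1 − 2ν²)`. -/
theorem gauss_curvature_upper_bound_dual (τ : ℝ) (Ω : Set (ℝ × ℝ)) (hΩ : IsOpen Ω)
    (u v : ℝ × ℝ → ℝ)
    (hu : ContDiffOn ℝ (⊤ : ℕ∞) u Ω) (hv : ContDiffOn ℝ (⊤ : ℕ∞) v Ω)
    (hsp : ∀ p ∈ Ω, (px v p) ^ 2 + (py v p) ^ 2 < 1)
    (htwinx : ∀ p ∈ Ω, px u p = py v p / omegT v p - τ * p.2)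
    (htwiny : ∀ p ∈ Ω, py u p = -px v p / omegT v p + τ * p.1) :
    ∀ p ∈ Ω,
      gaussK τ u p ≤ -4 * τ ^ 2 * (nuF τ u p) ^ 4
        + gaussKT v p * (nuF τ u p) ^ 2 * (1 - 2 * (nuF τ u p) ^ 2) := by
  intro p hp
  have hmem : Ω ∈ nhds p := hΩ.mem_nhds hp
  have hvp : ContDiffAt ℝ (⊤ : ℕ∞) v p := hv.contDiffAt hmem
  have hup : ContDiffAt ℝ (⊤ : ℕ∞) u p := hu.contDiffAt hmem
  have hsp' := hsp p hp
  have hW2 : 0 < 1 - px v p ^ 2 - py v p ^ 2 := by nlinarith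
  have hw2 : omegT v p ^ 2 = 1 - px v p ^ 2 - py v p ^ 2 := Real.sq_sqrt (by linarith)
  have hw0 : 0 < omegT v p := Real.sqrt_pos.mpr hW2
  have hwne : omegT v p ≠ 0 := hw0.ne'
  have hfdv : ContDiffAt ℝ (⊤ : ℕ∞) (fderiv ℝ v) p := hvp.fderiv_right (by simp)
  have hfdu : ContDiffAt ℝ (⊤ : ℕ∞) (fderiv ℝ u) p := hup.fderiv_right (by simp)
  have hdfv : DifferentiableAt ℝ (fderiv ℝ v) p := hfdv.differentiableAt (by simp)
  have hdfu : DifferentiableAt ℝ (fderiv ℝ u) p := hfdu.differentiableAt (by simp)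
  have hA : ContDiffAt ℝ (⊤ : ℕ∞) (px v) p := hfdv.clm_apply contDiffAt_const
  have hB : ContDiffAt ℝ (⊤ : ℕ∞) (py v) p := hfdv.clm_apply contDiffAt_const
  have hA' : HasFDerivAt (px v) (fderiv ℝ (px v) p) p :=
    (hA.differentiableAt (by simp)).hasFDerivAt
  have hB' : HasFDerivAt (py v) (fderiv ℝ (py v) p) p :=
    (hB.differentiableAt (by simp)).hasFDerivAt
  -- Schwarz symmetry for v and u
  have hsymv : py (px v) p = px (py v) p := by
    have hsf : IsSymmSndFDerivAt ℝ v p := hvp.isSymmSndFDerivAt (by rw [minSmoothness_of_isRCLikeNormedField]; exact WithTop.coe_le_coe.mpr (le_top : (2 : ℕ∞) ≤ ⊤))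
    have e1 : fderiv ℝ (px v) p = (fderiv ℝ (fderiv ℝ v) p).flip (1, 0) := by
      show fderiv ℝ (fun q => fderiv ℝ v q (1, 0)) p = _
      rw [fderiv_clm_apply hdfv (differentiableAt_const _)]
      simp
    have e2 : fderiv ℝ (py v) p = (fderiv ℝ (fderiv ℝ v) p).flip (0, 1) := by
      show fderiv ℝ (fun q => fderiv ℝ v q (0, 1)) p = _
      rw [fderiv_clm_apply hdfv (differentiableAt_const _)]
      simp
    show fderiv ℝ (px v) p (0, 1) = fderiv ℝ (py v) p (1, 0)
    rw [e1, e2]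
    simp only [ContinuousLinearMap.flip_apply]
    exact hsf (0, 1) (1, 0)
  have hsymu : py (px u) p = px (py u) p := by
    have hsf : IsSymmSndFDerivAt ℝ u p := hup.isSymmSndFDerivAt (by rw [minSmoothness_of_isRCLikeNormedField]; exact WithTop.coe_le_coe.mpr (le_top : (2 : ℕ∞) ≤ ⊤))
    have e1 : fderiv ℝ (px u) p = (fderiv ℝ (fderiv ℝ u) p).flip (1, 0) := by
      show fderiv ℝ (fun q => fderiv ℝ u q (1, 0)) p = _
      rw [fderiv_clm_apply hdfu (differentiableAt_const _)]
      simp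
    have e2 : fderiv ℝ (py u) p = (fderiv ℝ (fderiv ℝ u) p).flip (0, 1) := by
      show fderiv ℝ (fun q => fderiv ℝ u q (0, 1)) p = _
      rw [fderiv_clm_apply hdfu (differentiableAt_const _)]
      simp
    show fderiv ℝ (px u) p (0, 1) = fderiv ℝ (py u) p (1, 0)
    rw [e1, e2]
    simp only [ContinuousLinearMap.flip_apply]
    exact hsf (0, 1) (1, 0)
  -- derivative of the area element omegT v
  have hA2 : HasFDerivAt (fun q => px v q ^ 2)
      (px v p • fderiv ℝ (px v) p + px v p • fderiv ℝ (px v) p) p := by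
    have h := hA'.mul hA'; simp only [pow_two]; exact h
  have hB2 : HasFDerivAt (fun q => py v q ^ 2)
      (py v p • fderiv ℝ (py v) p + py v p • fderiv ℝ (py v) p) p := by
    have h := hB'.mul hB'; simp only [pow_two]; exact h
  have hG : HasFDerivAt (fun q => 1 - px v q ^ 2 - py v q ^ 2)
      ((0 : (ℝ × ℝ) →L[ℝ] ℝ)
        - (px v p • fderiv ℝ (px v) p + px v p • fderiv ℝ (px v) p)
        - (py v p • fderiv ℝ (py v) p + py v p • fderiv ℝ (py v) p)) p :=
    ((hasFDerivAt_const (1 : ℝ) p).sub hA2).sub hB2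
  have hW' : HasFDerivAt (omegT v)
      ((1 / (2 * omegT v p)) • ((0 : (ℝ × ℝ) →L[ℝ] ℝ)
        - (px v p • fderiv ℝ (px v) p + px v p • fderiv ℝ (px v) p)
        - (py v p • fderiv ℝ (py v) p + py v p • fderiv ℝ (py v) p))) p :=
    hG.sqrt (ne_of_gt hW2)
  -- fderiv of px u
  have hDx : HasFDerivAt (fun q => py v q / omegT v q - τ * q.2)
      ((-(py v p • (omegT v p ^ 2)⁻¹ • ((1 / (2 * omegT v p)) • ((0 : (ℝ × ℝ) →L[ℝ] ℝ)
          - (px v p • fderiv ℝ (px v) p + px v p • fderiv ℝ (px v) p)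
          - (py v p • fderiv ℝ (py v) p + py v p • fderiv ℝ (py v) p))))
        + (omegT v p)⁻¹ • fderiv ℝ (py v) p)
        - τ • ContinuousLinearMap.snd ℝ ℝ ℝ) p :=
    (hasFDerivAt_div' hB' hW' hwne).sub (hasFDerivAt_snd.const_mul τ)
  have hfd1 : fderiv ℝ (px u) p =
      ((-(py v p • (omegT v p ^ 2)⁻¹ • ((1 / (2 * omegT v p)) • ((0 : (ℝ × ℝ) →L[ℝ] ℝ)
          - (px v p • fderiv ℝ (px v) p + px v p • fderiv ℝ (px v) p)
          - (py v p • fderiv ℝ (py v) p + py v p • fderiv ℝ (py v) p))))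
        + (omegT v p)⁻¹ • fderiv ℝ (py v) p)
        - τ • ContinuousLinearMap.snd ℝ ℝ ℝ) := by
    rw [Filter.EventuallyEq.fderiv_eq (by filter_upwards [hmem] with q hq using htwinx q hq)]
    exact hDx.fderiv
  -- fderiv of py u
  have hDy : HasFDerivAt (fun q => -px v q / omegT v q + τ * q.1)
      ((-((-px v p) • (omegT v p ^ 2)⁻¹ • ((1 / (2 * omegT v p)) • ((0 : (ℝ × ℝ) →L[ℝ] ℝ)
          - (px v p • fderiv ℝ (px v) p + px v p • fderiv ℝ (px v) p)
          - (py v p • fderiv ℝ (py v) p + py v p • fderiv ℝ (py v) p))))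
        + (omegT v p)⁻¹ • (-(fderiv ℝ (px v) p)))
        + τ • ContinuousLinearMap.fst ℝ ℝ ℝ) p :=
    (hasFDerivAt_div' hA'.neg hW' hwne).add (hasFDerivAt_fst.const_mul τ)
  have hfd2 : fderiv ℝ (py u) p =
      ((-((-px v p) • (omegT v p ^ 2)⁻¹ • ((1 / (2 * omegT v p)) • ((0 : (ℝ × ℝ) →L[ℝ] ℝ)
          - (px v p • fderiv ℝ (px v) p + px v p • fderiv ℝ (px v) p)
          - (py v p • fderiv ℝ (py v) p + py v p • fderiv ℝ (py v) p))))
        + (omegT v p)⁻¹ • (-(fderiv ℝ (px v) p)))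
        + τ • ContinuousLinearMap.fst ℝ ℝ ℝ) := by
    rw [Filter.EventuallyEq.fderiv_eq (by filter_upwards [hmem] with q hq using htwiny q hq)]
    exact hDy.fderiv
  -- second partial derivatives of u
  have c1 : fderiv ℝ (px v) p (1, 0) = px (px v) p := rfl
  have c2 : fderiv ℝ (px v) p (0, 1) = py (px v) p := rfl
  have c3 : fderiv ℝ (py v) p (1, 0) = px (py v) p := rfl
  have c4 : fderiv ℝ (py v) p (0, 1) = py (py v) p := rfl
  have huxx : px (px u) p = (px (py v) p * omegT v p ^ 2 + px v p * py v p * px (px v) p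
      + py v p ^ 2 * px (py v) p) / omegT v p ^ 3 := by
    show fderiv ℝ (px u) p (1, 0) = _
    rw [hfd1]
    simp only [ContinuousLinearMap.sub_apply, ContinuousLinearMap.add_apply,
      ContinuousLinearMap.neg_apply, ContinuousLinearMap.smul_apply,
      ContinuousLinearMap.zero_apply, ContinuousLinearMap.coe_snd', smul_eq_mul,
      c1, c2, c3, c4]
    field_simp
    ring
  have huxy : py (px u) p = (py (py v) p * omegT v p ^ 2 + px v p * py v p * py (px v) p
      + py v p ^ 2 * py (py v) p) / omegT v p ^ 3 - τ := by
    show fderiv ℝ (px u) p (0, 1) = _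
    rw [hfd1]
    simp only [ContinuousLinearMap.sub_apply, ContinuousLinearMap.add_apply,
      ContinuousLinearMap.neg_apply, ContinuousLinearMap.smul_apply,
      ContinuousLinearMap.zero_apply, ContinuousLinearMap.coe_snd', smul_eq_mul,
      c1, c2, c3, c4]
    field_simp
    ring
  have huyx : px (py u) p = -((px (px v) p * omegT v p ^ 2 + px v p ^ 2 * px (px v) p
      + px v p * py v p * px (py v) p) / omegT v p ^ 3) + τ := by
    show fderiv ℝ (py u) p (1, 0) = _
    rw [hfd2]
    simp only [ContinuousLinearMap.sub_apply, ContinuousLinearMap.add_apply,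
      ContinuousLinearMap.neg_apply, ContinuousLinearMap.smul_apply,
      ContinuousLinearMap.zero_apply, ContinuousLinearMap.coe_fst', smul_eq_mul,
      c1, c2, c3, c4]
    field_simp
    ring
  have huyy : py (py u) p = -((py (px v) p * omegT v p ^ 2 + px v p ^ 2 * py (px v) p
      + px v p * py v p * py (py v) p) / omegT v p ^ 3) := by
    show fderiv ℝ (py u) p (0, 1) = _
    rw [hfd2]
    simp only [ContinuousLinearMap.sub_apply, ContinuousLinearMap.add_apply,
      ContinuousLinearMap.neg_apply, ContinuousLinearMap.smul_apply,
      ContinuousLinearMap.zero_apply, ContinuousLinearMap.coe_fst', smul_eq_mul,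
      c1, c2, c3, c4]
    field_simp
    ring
  -- the CMC-τ equation from Schwarz symmetry of u
  have hcmc : px (px v) p * (1 - py v p ^ 2) + 2 * (px v p * py v p) * py (px v) p
      + py (py v) p * (1 - px v p ^ 2) = 2 * τ * omegT v p ^ 3 := by
    have h := hsymu
    rw [huxy, huyx, ← hsymv] at h
    field_simp at h
    linear_combination h - (px (px v) p + py (py v) p) * hw2
  -- first order data of the graph of u
  have hα : alph τ u p = py v p / omegT v p := by
    show px u p + τ * p.2 = _
    rw [htwinx p hp]; ring
  have hβ : bet τ u p = -px v p / omegT v p := by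
    show py u p - τ * p.1 = _
    rw [htwiny p hp]; ring
  have hω : omeg τ u p = 1 / omegT v p := by
    show Real.sqrt (1 + alph τ u p ^ 2 + bet τ u p ^ 2) = _
    rw [hα, hβ]
    rw [show 1 + (py v p / omegT v p) ^ 2 + (-px v p / omegT v p) ^ 2
        = (1 / omegT v p) ^ 2 by field_simp; linarith [hw2]]
    exact Real.sqrt_sq (by positivity)
  have hν : 1 / omeg τ u p = omegT v p := by rw [hω, one_div_one_div]
  -- rewrite huxx/huxy in terms of py (px v) p only
  rw [← hsymv] at huxx
  simp only [gaussK, gaussKT, nuF]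
  exact master (px v p) (py v p) (px (px v) p) (py (px v) p) (py (py v) p) τ (omegT v p)
    hw0 hw2 hcmc _ _ _ _ _ _ _ _ huxx huxy huyy hα hβ hω hν rfl
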